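/- arXiv:1810.08813 — 4 statements merged into one kernel-verified Lean document; each statement's English description precedes it below -/
import Mathlib

section
/- Assume all zeros are simple, i.e. ℓ_j ≤ 1 for every index j. Then H(ℓ) equals the additive submonoid of (Fin r → ℕ) generated by the set {e_j : ℓ_j ≥ 0} ∪ {v + e_k : ℓ_k < 0, v ∈ (Fin r → ℕ), supp(v) ⊆ {j : ℓ_j = 1}, |v| = −ℓ_k}. -/
/-- The additive submonoid `H(ℓ) = {a : Fin r → ℕ | ∑ i, a i • ℓ i ≥ 0}`. -/
def Hmono (r : ℕ) (ℓ : Fin r → ℤ) : AddSubmonoid (Fin r → ℕ) where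
  carrier := {a | 0 ≤ ∑ i, (a i : ℤ) * ℓ i}
  zero_mem' := by simp
  add_mem' := by
    intro a b ha hb
    simp only [Set.mem_setOf_eq, Pi.add_apply] at *
    have h : ∑ i, ((a i + b i : ℕ) : ℤ) * ℓ i
        = (∑ i, (a i : ℤ) * ℓ i) + ∑ i, (b i : ℤ) * ℓ i := by
      rw [← Finset.sum_add_distrib]
      apply Finset.sum_congr rfl
      intro i _
      push_cast
      ring
    rw [h]
    exact add_nonneg ha hb

private lemma exists_v {r : ℕ} (a : Fin r → ℕ) (S : Finset (Fin r)) :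
    ∀ m, m ≤ ∑ i ∈ S, a i → ∃ v : Fin r → ℕ,
      (∀ i, v i ≤ a i) ∧ (∀ i, v i ≠ 0 → i ∈ S) ∧ ∑ i, v i = m := by
  intro m
  induction m with
  | zero => exact fun _ => ⟨0, by simp, by simp, by simp⟩
  | succ m ih =>
    intro hm
    obtain ⟨v, hva, hvS, hvs⟩ := ih (le_of_lt (Nat.lt_of_succ_le hm))
    have hz : ∀ x ∈ Finset.univ, x ∉ S → v x = 0 := by
      intro x _ hx
      by_contra h
      exact hx (hvS x h)
    have hsum : ∑ i ∈ S, v i = ∑ i, v i := Finset.sum_subset (Finset.subset_univ S) hz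
    have hlt : ∑ i ∈ S, v i < ∑ i ∈ S, a i := by
      rw [hsum, hvs]; omega
    obtain ⟨i, hiS, hi⟩ := Finset.exists_lt_of_sum_lt hlt
    refine ⟨v + Pi.single i 1, ?_, ?_, ?_⟩
    · intro j
      by_cases h : j = i
      · subst h; simpa using hi
      · simpa [Pi.single_apply, h] using hva j
    · intro j hj
      by_cases h : j = i
      · subst h; exact hiS
      · simp only [Pi.add_apply, Pi.single_apply, h, if_neg, if_false, add_zero] at hj
        exact hvS j hj
    · have h2 : ∑ j, (v j + (Pi.single i (1:ℕ) : Fin r → ℕ) j) = (∑ j, v j) + ∑ j, (Pi.single i (1:ℕ) : Fin r → ℕ) j := by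
        rw [Finset.sum_add_distrib]
      show ∑ j, (v j + (Pi.single i (1:ℕ) : Fin r → ℕ) j) = m + 1
      rw [h2, hvs]
      simp [Pi.single_apply]

private lemma mem_closure_aux (r : ℕ) (ℓ : Fin r → ℤ) (hsz : ∀ j, ℓ j ≤ 1) :
    ∀ n (a : Fin r → ℕ), ∑ i, a i = n → 0 ≤ ∑ i, (a i : ℤ) * ℓ i →
      a ∈ AddSubmonoid.closure
        ({u | ∃ j, 0 ≤ ℓ j ∧ u = Pi.single j 1} ∪
         {u | ∃ k, ∃ v : Fin r → ℕ, ℓ k < 0 ∧ (∀ j, v j ≠ 0 → ℓ j = 1) ∧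
            ((∑ i, v i : ℕ) : ℤ) = -ℓ k ∧ u = v + Pi.single k 1}) := by
  intro n
  induction n using Nat.strong_induction_on with
  | _ n ih =>
    intro a hn ha
    by_cases hneg : ∃ k, a k ≠ 0 ∧ ℓ k < 0
    · obtain ⟨k, hak, hk⟩ := hneg
      set S : Finset (Fin r) := Finset.univ.filter (fun i => ℓ i = 1) with hS
      have hkS : k ∉ S := by
        simp only [hS, Finset.mem_filter]
        omega
      have hm0 : 0 ≤ -ℓ k := by omega
      set m : ℕ := (-ℓ k).toNat with hmdef
      have hmz : (m : ℤ) = -ℓ k := Int.toNat_of_nonneg hm0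
      -- split the sum
      have hsplit : ∑ i ∈ S, (a i : ℤ) * ℓ i + ∑ i ∈ Finset.univ.filter (fun i => ¬ ℓ i = 1), (a i : ℤ) * ℓ i = ∑ i, (a i : ℤ) * ℓ i :=
        Finset.sum_filter_add_sum_filter_not Finset.univ _ _
      have hSval : ∑ i ∈ S, (a i : ℤ) * ℓ i = ((∑ i ∈ S, a i : ℕ) : ℤ) := by
        push_cast
        apply Finset.sum_congr rfl
        intro i hi
        simp only [hS, Finset.mem_filter] at hi
        rw [hi.2, mul_one]
      have hkSc : k ∈ Finset.univ.filter (fun i => ¬ ℓ i = 1) := by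
        simp only [Finset.mem_filter, Finset.mem_univ, true_and]
        omega
      have hScle : ∑ i ∈ Finset.univ.filter (fun i => ¬ ℓ i = 1), (a i : ℤ) * ℓ i ≤ ℓ k := by
        rw [← Finset.add_sum_erase _ _ hkSc]
        have h1 : (a k : ℤ) * ℓ k ≤ ℓ k := by
          have : (1 : ℤ) ≤ (a k : ℤ) := by exact_mod_cast Nat.one_le_iff_ne_zero.mpr hak
          nlinarith
        have h2 : ∑ i ∈ (Finset.univ.filter (fun i => ¬ ℓ i = 1)).erase k, (a i : ℤ) * ℓ i ≤ 0 := by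
          apply Finset.sum_nonpos
          intro i hi
          simp only [Finset.mem_erase, Finset.mem_filter, Finset.mem_univ, true_and] at hi
          have : ℓ i ≤ 0 := by have := hsz i; omega
          exact mul_nonpos_of_nonneg_of_nonpos (by positivity) this
        linarith
      have hmle : m ≤ ∑ i ∈ S, a i := by
        have : (m : ℤ) ≤ ((∑ i ∈ S, a i : ℕ) : ℤ) := by
          rw [hmz, ← hSval]
          linarith [hsplit ▸ ha]
        exact_mod_cast this
      obtain ⟨v, hva, hvS, hvs⟩ := exists_v a S m hmle
      have hvk : v k = 0 := by
        by_contra h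
        exact hkS (hvS k h)
      set w : Fin r → ℕ := v + Pi.single k 1 with hw
      have hwa : ∀ i, w i ≤ a i := by
        intro i
        by_cases h : i = k
        · subst h
          simp only [hw, Pi.add_apply, hvk, Pi.single_eq_same, zero_add]
          omega
        · simpa [hw, Pi.single_apply, h] using hva i
      set b : Fin r → ℕ := fun i => a i - w i with hb
      have habw : a = b + w := by
        funext i
        have := hwa i
        simp only [hb, Pi.add_apply]
        omega
      have hws : ∑ i, w i = m + 1 := by
        have : ∑ j, (v j + (Pi.single k (1:ℕ) : Fin r → ℕ) j) = (∑ j, v j) + ∑ j, (Pi.single k (1:ℕ) : Fin r → ℕ) j := Finset.sum_add_distrib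
        show ∑ j, (v j + (Pi.single k (1:ℕ) : Fin r → ℕ) j) = m + 1
        rw [this, hvs]
        simp [Pi.single_apply]
      have hvℓ : ∑ i, (v i : ℤ) * ℓ i = (m : ℤ) := by
        have : ∀ i, (v i : ℤ) * ℓ i = (v i : ℤ) := by
          intro i
          by_cases h : v i = 0
          · simp [h]
          · have := hvS i h
            simp only [hS, Finset.mem_filter] at this
            rw [this.2, mul_one]
        rw [Finset.sum_congr rfl (fun i _ => this i), ← hvs]
        push_cast
        ring
      have hwℓ : ∑ i, (w i : ℤ) * ℓ i = 0 := by
        have h1 : ∑ i, (w i : ℤ) * ℓ i = ∑ i, (v i : ℤ) * ℓ i + ∑ i, ((Pi.single k (1:ℕ) : Fin r → ℕ) i : ℤ) * ℓ i := by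
          rw [← Finset.sum_add_distrib]
          apply Finset.sum_congr rfl
          intro i _
          simp only [hw, Pi.add_apply]
          push_cast
          ring
        have h2 : ∑ i, ((Pi.single k (1:ℕ) : Fin r → ℕ) i : ℤ) * ℓ i = ℓ k := by
          rw [Finset.sum_eq_single k]
          · simp
          · intro i _ h
            simp [Pi.single_apply, h]
          · simp
        rw [h1, h2, hvℓ, hmz]
        ring
      have hbℓ : 0 ≤ ∑ i, (b i : ℤ) * ℓ i := by
        have h1 : ∑ i, (a i : ℤ) * ℓ i = ∑ i, (b i : ℤ) * ℓ i + ∑ i, (w i : ℤ) * ℓ i := by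
          rw [← Finset.sum_add_distrib]
          apply Finset.sum_congr rfl
          intro i _
          have : a i = b i + w i := by rw [habw]; rfl
          rw [this]
          push_cast
          ring
        rw [h1, hwℓ] at ha
        linarith
      have hbn : ∑ i, b i < n := by
        have h1 : ∑ i, a i = ∑ i, b i + ∑ i, w i := by
          rw [habw]
          exact Finset.sum_add_distrib
        omega
      have hbmem := ih (∑ i, b i) (by omega) b rfl hbℓ
      have hwmem : w ∈ AddSubmonoid.closure
        ({u | ∃ j, 0 ≤ ℓ j ∧ u = Pi.single j 1} ∪
         {u | ∃ k, ∃ v : Fin r → ℕ, ℓ k < 0 ∧ (∀ j, v j ≠ 0 → ℓ j = 1) ∧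
            ((∑ i, v i : ℕ) : ℤ) = -ℓ k ∧ u = v + Pi.single k 1}) := by
        apply AddSubmonoid.subset_closure
        right
        refine ⟨k, v, hk, ?_, ?_, rfl⟩
        · intro j hj
          have := hvS j hj
          simp only [hS, Finset.mem_filter] at this
          exact this.2
        · rw [hvs, hmz]
      rw [habw]
      exact add_mem hbmem hwmem
    · push_neg at hneg
      have : a = ∑ i, Pi.single i (a i) := (Finset.univ_sum_single a).symm
      rw [this]
      apply sum_mem
      intro i _
      by_cases h : a i = 0
      · simp only [h, Pi.single_zero]
        exact zero_mem _
      · have hℓi : 0 ≤ ℓ i := hneg i h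
        have : (Pi.single i (a i) : Fin r → ℕ) = a i • (Pi.single i 1 : Fin r → ℕ) := by
          funext j
          simp [Pi.single_apply]
        rw [this]
        have hgen : (Pi.single i 1 : Fin r → ℕ) ∈ AddSubmonoid.closure
            ({u | ∃ j, 0 ≤ ℓ j ∧ u = Pi.single j 1} ∪
             {u | ∃ k, ∃ v : Fin r → ℕ, ℓ k < 0 ∧ (∀ j, v j ≠ 0 → ℓ j = 1) ∧
                ((∑ i, v i : ℕ) : ℤ) = -ℓ k ∧ u = v + Pi.single k 1}) :=
          AddSubmonoid.subset_closure (Or.inl ⟨i, hℓi, rfl⟩)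
        exact nsmul_mem hgen (a i)


/-- If all zeros are simple (`ℓ j ≤ 1` for all `j`), then `H(ℓ)` is generated by the
`e_j` with `ℓ j ≥ 0` together with the `v + e_k` with `ℓ k < 0`, `supp v ⊆ {j | ℓ j = 1}`
and `|v| = -ℓ k`. -/
theorem stmt14 (r : ℕ) (ℓ : Fin r → ℤ) (hsz : ∀ j, ℓ j ≤ 1) :
    Hmono r ℓ = AddSubmonoid.closure
      ({u | ∃ j, 0 ≤ ℓ j ∧ u = Pi.single j 1} ∪
       {u | ∃ k, ∃ v : Fin r → ℕ, ℓ k < 0 ∧ (∀ j, v j ≠ 0 → ℓ j = 1) ∧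
          ((∑ i, v i : ℕ) : ℤ) = -ℓ k ∧ u = v + Pi.single k 1}) := by
  apply le_antisymm
  · intro a ha
    exact mem_closure_aux r ℓ hsz (∑ i, a i) a rfl ha
  · rw [AddSubmonoid.closure_le]
    rintro u (⟨j, hj, rfl⟩ | ⟨k, v, hk, hv, hm, rfl⟩)
    · show (0 : ℤ) ≤ ∑ i, ((Pi.single j (1:ℕ) : Fin r → ℕ) i : ℤ) * ℓ i
      have : ∑ i, ((Pi.single j (1:ℕ) : Fin r → ℕ) i : ℤ) * ℓ i = ℓ j := by
        rw [Finset.sum_eq_single j]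
        · simp
        · intro i _ h
          simp [Pi.single_apply, h]
        · simp
      rw [this]
      exact hj
    · show (0 : ℤ) ≤ ∑ i, (((v + Pi.single k 1 : Fin r → ℕ)) i : ℤ) * ℓ i
      have h1 : ∑ i, (((v + Pi.single k 1 : Fin r → ℕ)) i : ℤ) * ℓ i
          = ∑ i, (v i : ℤ) * ℓ i + ∑ i, ((Pi.single k (1:ℕ) : Fin r → ℕ) i : ℤ) * ℓ i := by
        rw [← Finset.sum_add_distrib]
        apply Finset.sum_congr rfl
        intro i _
        simp only [Pi.add_apply]
        push_cast
        ring
      have h2 : ∑ i, ((Pi.single k (1:ℕ) : Fin r → ℕ) i : ℤ) * ℓ i = ℓ k := by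
        rw [Finset.sum_eq_single k]
        · simp
        · intro i _ h
          simp [Pi.single_apply, h]
        · simp
      have h3 : ∑ i, (v i : ℤ) * ℓ i = -ℓ k := by
        rw [← hm]
        push_cast
        apply Finset.sum_congr rfl
        intro i _
        by_cases h : v i = 0
        · simp [h]
        · rw [hv i h, mul_one]
      rw [h1, h2, h3]
      ring_nf
      omega
end

section
/- Assume all zeros and poles are simple, i.e. ℓ_j ∈ {−1, 0, 1} for every index j. Then H(ℓ) equals the additive submonoid of (Fin r → ℕ) generated by the set {e_j : ℓ_j ≥ 0} ∪ {e_j + e_k : ℓ_j = 1 and ℓ_k = −1}. -/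
lemma sum_single_mul (r : ℕ) (ℓ : Fin r → ℤ) (j : Fin r) :
    ∑ i, ((Pi.single j 1 : Fin r → ℕ) i : ℤ) * ℓ i = ℓ j := by
  simp [Pi.single_apply, ite_mul]

lemma mem_Hmono (r : ℕ) (ℓ : Fin r → ℤ) (a : Fin r → ℕ) :
    a ∈ Hmono r ℓ ↔ 0 ≤ ∑ i, (a i : ℤ) * ℓ i := Iff.rfl

lemma sum_add_mul (r : ℕ) (ℓ : Fin r → ℤ) (a b : Fin r → ℕ) :
    ∑ i, (((a + b) i : ℕ) : ℤ) * ℓ i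
      = (∑ i, (a i : ℤ) * ℓ i) + ∑ i, (b i : ℤ) * ℓ i := by
  rw [← Finset.sum_add_distrib]
  apply Finset.sum_congr rfl
  intro i _
  simp only [Pi.add_apply]
  push_cast
  ring

/-- If all zeros and poles are simple (`ℓ j ∈ {-1,0,1}`), then `H(ℓ)` is generated by the
`e_j` with `ℓ j ≥ 0` together with the `e_j + e_k` with `ℓ j = 1` and `ℓ k = -1`. -/
theorem stmt15 (r : ℕ) (ℓ : Fin r → ℤ)
    (hs : ∀ j, ℓ j = -1 ∨ ℓ j = 0 ∨ ℓ j = 1) :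
    Hmono r ℓ = AddSubmonoid.closure
      ({u | ∃ j, 0 ≤ ℓ j ∧ u = Pi.single j 1} ∪
       {u | ∃ j k, ℓ j = 1 ∧ ℓ k = -1 ∧ u = Pi.single j 1 + Pi.single k 1}) := by
  set S := AddSubmonoid.closure
      ({u | ∃ j, 0 ≤ ℓ j ∧ u = Pi.single j 1} ∪
       {u | ∃ j k, ℓ j = 1 ∧ ℓ k = -1 ∧ u = Pi.single j 1 + Pi.single k 1}) with hSdef
  have hsingle : ∀ j : Fin r, 0 ≤ ℓ j → (Pi.single j 1 : Fin r → ℕ) ∈ S := by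
    intro j hj
    exact AddSubmonoid.subset_closure (Or.inl ⟨j, hj, rfl⟩)
  have hpair : ∀ j k : Fin r, ℓ j = 1 → ℓ k = -1 →
      (Pi.single j 1 + Pi.single k 1 : Fin r → ℕ) ∈ S := by
    intro j k hj hk
    exact AddSubmonoid.subset_closure (Or.inr ⟨j, k, hj, hk, rfl⟩)
  apply le_antisymm
  · -- Hmono ≤ S
    intro a ha
    rw [mem_Hmono] at ha
    -- strong induction on total degree
    have key : ∀ n : ℕ, ∀ a : Fin r → ℕ, (∑ i, a i) = n →
        0 ≤ ∑ i, (a i : ℤ) * ℓ i → a ∈ S := by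
      intro n
      induction n using Nat.strong_induction_on with
      | _ n ih =>
        intro a hsum ha
        rcases Nat.eq_zero_or_pos n with hn | hn
        · have : a = 0 := by
            funext i
            have hz := Finset.sum_eq_zero_iff.mp (show ∑ i, a i = 0 by omega)
            exact hz i (Finset.mem_univ i)
          rw [this]; exact zero_mem S
        · by_cases hneg : ∃ k, ℓ k = -1 ∧ 0 < a k
          · obtain ⟨k, hk, hak⟩ := hneg
            -- there must be j with ℓ j = 1 and a j > 0
            have hex : ∃ j, ℓ j = 1 ∧ 0 < a j := by
              by_contra hcon
              push_neg at hcon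
              have hlt : ∑ i, (a i : ℤ) * ℓ i < 0 := by
                have := Finset.sum_lt_sum (f := fun i => (a i : ℤ) * ℓ i)
                  (g := fun _ => (0 : ℤ)) (s := Finset.univ)
                  (by
                    intro i _
                    rcases hs i with h | h | h
                    · rw [h]; simp
                    · rw [h]; simp
                    · have : a i = 0 := Nat.le_zero.mp (hcon i h)
                      rw [this]; simp)
                  ⟨k, Finset.mem_univ k, by
                    rw [hk]
                    have : (0:ℤ) < (a k : ℤ) := by exact_mod_cast hak
                    nlinarith⟩
                simpa using this
              omega
            obtain ⟨j, hj, haj⟩ := hex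
            have hjk : j ≠ k := by intro h; rw [h, hk] at hj; omega
            set b : Fin r → ℕ := a - (Pi.single j 1 + Pi.single k 1) with hb
            have hab : a = b + (Pi.single j 1 + Pi.single k 1) := by
              funext i
              simp only [hb, Pi.add_apply, Pi.sub_apply, Pi.single_apply]
              by_cases hij : i = j
              · subst hij; simp [hjk]; omega
              · by_cases hik : i = k
                · subst hik; simp [Ne.symm hjk]; omega
                · simp [hij, hik]
            have hbsum : ∑ i, b i = n - 2 := by
              have : ∑ i, a i = (∑ i, b i) + 2 := by
                rw [hab]
                simp [Pi.add_apply, Pi.single_apply, Finset.sum_add_distrib]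
              omega
            have hbmem : 0 ≤ ∑ i, (b i : ℤ) * ℓ i := by
              have heq : ∑ i, (a i : ℤ) * ℓ i
                  = (∑ i, (b i : ℤ) * ℓ i) + (ℓ j + ℓ k) := by
                rw [hab, sum_add_mul, sum_add_mul, sum_single_mul, sum_single_mul]
              rw [heq, hj, hk] at ha
              omega
            have hbS : b ∈ S := ih (n - 2) (by omega) b hbsum hbmem
            rw [hab]
            exact add_mem hbS (hpair j k hj hk)
          · -- all entries with a i > 0 have ℓ i ≥ 0
            push_neg at hneg
            have hexi : ∃ i, 0 < a i := by
              by_contra hcon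
              push_neg at hcon
              have : ∑ i, a i = 0 := Finset.sum_eq_zero (fun i _ => Nat.le_zero.mp (hcon i))
              omega
            obtain ⟨i0, hi0⟩ := hexi
            have hL0 : 0 ≤ ℓ i0 := by
              rcases hs i0 with h | h | h
              · have := hneg i0 h; omega
              · omega
              · omega
            set b : Fin r → ℕ := a - Pi.single i0 1 with hb
            have hab : a = b + Pi.single i0 1 := by
              funext i
              simp only [hb, Pi.add_apply, Pi.sub_apply, Pi.single_apply]
              by_cases hii : i = i0
              · subst hii; simp; omega
              · simp [hii]
            have hbsum : ∑ i, b i = n - 1 := by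
              have : ∑ i, a i = (∑ i, b i) + 1 := by
                rw [hab]
                simp [Pi.add_apply, Pi.single_apply, Finset.sum_add_distrib]
              omega
            have hbmem : 0 ≤ ∑ i, (b i : ℤ) * ℓ i := by
              apply Finset.sum_nonneg
              intro i _
              rcases Nat.eq_zero_or_pos (b i) with h | h
              · simp [h]
              · have hai : 0 < a i := by
                  have : b i ≤ a i := by
                    rw [hab]; simp [Pi.add_apply]
                  omega
                have : 0 ≤ ℓ i := by
                  rcases hs i with h' | h' | h'
                  · have := hneg i h'; omega
                  · omega
                  · omega
                positivity
            have hbS : b ∈ S := ih (n - 1) (by omega) b hbsum hbmem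
            rw [hab]
            exact add_mem hbS (hsingle i0 hL0)
    exact key (∑ i, a i) a rfl ha
  · -- S ≤ Hmono
    rw [hSdef]
    apply AddSubmonoid.closure_le.mpr
    rintro u (⟨j, hj, rfl⟩ | ⟨j, k, hj, hk, rfl⟩)
    · rw [SetLike.mem_coe, mem_Hmono, sum_single_mul]
      exact hj
    · rw [SetLike.mem_coe, mem_Hmono, sum_add_mul, sum_single_mul, sum_single_mul, hj, hk]
      omega
end

section
/- Suppose there is an index i₀ with ℓ_{i₀} > 0, with ℓ_j ≤ 0 for all j ≠ i₀, and with ℓ_{i₀} dividing ℓ_j for every j; for j ≠ i₀ set m_j = (−ℓ_j)/ℓ_{i₀} ∈ ℕ. Then the submonoid H̄(ℓ) of the additive group (Fin r → ℤ) equals the submonoid generated by e_{i₀}, the elements ±(m_j·e_{i₀} + e_j) for the indices j with ℓ_j < 0, and the elements ±e_j for the indices j with ℓ_j = 0. -/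
/-- The additive submonoid `H̄(ℓ) = {a : Fin r → ℤ | ∑ i, a i * ℓ i ≥ 0}` of exponent
vectors of L-functions of virtual characters holomorphic at `s₀`. -/
def HbarMono (r : ℕ) (ℓ : Fin r → ℤ) : AddSubmonoid (Fin r → ℤ) where
  carrier := {a | 0 ≤ ∑ i, a i * ℓ i}
  zero_mem' := by simp
  add_mem' := by
    intro a b ha hb
    simp only [Set.mem_setOf_eq, Pi.add_apply] at *
    have h : ∑ i, (a i + b i) * ℓ i
        = (∑ i, a i * ℓ i) + ∑ i, b i * ℓ i := by
      rw [← Finset.sum_add_distrib]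
      apply Finset.sum_congr rfl
      intro i _
      ring
    rw [h]
    exact add_nonneg ha hb

section Aux

variable {r : ℕ} (ℓ : Fin r → ℤ)

lemma mem_HbarMono {a : Fin r → ℤ} : a ∈ HbarMono r ℓ ↔ 0 ≤ ∑ i, a i * ℓ i := Iff.rfl

lemma sumL_single (j : Fin r) (c : ℤ) : ∑ i, (Pi.single j c : Fin r → ℤ) i * ℓ i = c * ℓ j := by
  rw [Finset.sum_eq_single j]
  · simp
  · intro b _ hb; simp [Pi.single_apply, hb]
  · simp

lemma sumL_neg (a : Fin r → ℤ) : ∑ i, (-a) i * ℓ i = -∑ i, a i * ℓ i := by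
  rw [← Finset.sum_neg_distrib]
  exact Finset.sum_congr rfl fun i _ => by simp [neg_mul]

lemma sumL_add (a b : Fin r → ℤ) :
    ∑ i, (a + b) i * ℓ i = (∑ i, a i * ℓ i) + ∑ i, b i * ℓ i := by
  rw [← Finset.sum_add_distrib]
  exact Finset.sum_congr rfl fun i _ => by simp [add_mul]

lemma nsmul_single (j : Fin r) (n : ℕ) :
    n • (Pi.single j (1 : ℤ) : Fin r → ℤ) = Pi.single j (n : ℤ) := by
  funext k
  by_cases hk : k = j <;> simp [Pi.single_apply, hk]

lemma zsmul_mem_of_pm {G : Type*} [AddCommGroup G] (S : AddSubmonoid G) {x : G}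
    (hx : x ∈ S) (hnx : -x ∈ S) (z : ℤ) : z • x ∈ S := by
  rcases le_or_gt 0 z with h | h
  · have hz : z • x = z.toNat • x := by rw [← natCast_zsmul, Int.toNat_of_nonneg h]
    rw [hz]; exact AddSubmonoid.nsmul_mem S hx _
  · have hz : z • x = (-z).toNat • (-x) := by
      rw [← natCast_zsmul, Int.toNat_of_nonneg (by omega), smul_neg, ← neg_smul, neg_neg]
    rw [hz]; exact AddSubmonoid.nsmul_mem S hnx _

end Aux

set_option maxHeartbeats 1000000 in
/-- If `ℓ i₀ > 0`, `ℓ j ≤ 0` for `j ≠ i₀`, and `ℓ i₀ ∣ ℓ j` with `m j = -ℓ j / ℓ i₀`, then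
`H̄(ℓ)` is generated by `e i₀`, the `±(m j • e i₀ + e j)` for `ℓ j < 0`, and the `±e j`
for `ℓ j = 0`. -/
theorem stmt17 (r : ℕ) (ℓ : Fin r → ℤ) (i₀ : Fin r)
    (hi₀ : 0 < ℓ i₀) (hneg : ∀ j, j ≠ i₀ → ℓ j ≤ 0) (hdvd : ∀ j, ℓ i₀ ∣ ℓ j)
    (m : Fin r → ℕ) (hm : ∀ j, j ≠ i₀ → (m j : ℤ) * ℓ i₀ = -ℓ j) :
    HbarMono r ℓ = AddSubmonoid.closure
      ({Pi.single i₀ (1 : ℤ)} ∪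
       {v | ∃ j, ℓ j < 0 ∧
          (v = m j • Pi.single i₀ (1 : ℤ) + Pi.single j 1 ∨
           v = -(m j • Pi.single i₀ (1 : ℤ) + Pi.single j 1))} ∪
       {v | ∃ j, ℓ j = 0 ∧ (v = Pi.single j (1 : ℤ) ∨ v = -Pi.single j (1 : ℤ))}) := by
  set G := ({Pi.single i₀ (1 : ℤ)} ∪
       {v | ∃ j, ℓ j < 0 ∧
          (v = m j • Pi.single i₀ (1 : ℤ) + Pi.single j 1 ∨
           v = -(m j • Pi.single i₀ (1 : ℤ) + Pi.single j 1))} ∪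
       {v : Fin r → ℤ | ∃ j, ℓ j = 0 ∧ (v = Pi.single j (1 : ℤ) ∨ v = -Pi.single j (1 : ℤ))})
    with hG
  have hwsum : ∀ j, j ≠ i₀ →
      ∑ i, ((m j • Pi.single i₀ (1 : ℤ) + Pi.single j 1 : Fin r → ℤ)) i * ℓ i = 0 := by
    intro j hj
    rw [sumL_add, nsmul_single, sumL_single, sumL_single, one_mul, hm j hj]
    ring
  apply le_antisymm
  · -- ⊆ : every element of HbarMono is in the closure
    intro a ha
    rw [mem_HbarMono] at ha
    set u : Fin r → (Fin r → ℤ) :=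
      fun j => (Pi.single i₀ ((m j : ℤ)) : Fin r → ℤ) + Pi.single j 1 with hu
    have huw : ∀ j, u j = m j • (Pi.single i₀ (1 : ℤ) : Fin r → ℤ) + Pi.single j 1 := by
      intro j; rw [nsmul_single]
    set c : ℤ := a i₀ - ∑ j ∈ Finset.univ.erase i₀, a j * m j with hc
    have key : a = c • (Pi.single i₀ (1 : ℤ) : Fin r → ℤ)
        + ∑ j ∈ Finset.univ.erase i₀, a j • u j := by
      funext k
      simp only [Pi.add_apply, Finset.sum_apply]
      by_cases hk : k = i₀
      · rw [hk]
        have h1 : ∀ j ∈ Finset.univ.erase i₀, (a j • u j) i₀ = a j * (m j : ℤ) := by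
          intro j hj
          have hji : j ≠ i₀ := (Finset.mem_erase.mp hj).1
          simp [hu, Pi.single_apply, hji]
        rw [Finset.sum_congr rfl h1]
        simp only [Pi.smul_apply, Pi.single_eq_same, smul_eq_mul, mul_one]
        rw [hc]; ring
      · rw [Finset.sum_eq_single k]
        · simp [hu, Pi.single_apply, hk]
        · intro b _ hb
          simp [hu, Pi.single_apply, hk, Ne.symm hb]
        · intro h
          exact absurd (Finset.mem_erase.mpr ⟨hk, Finset.mem_univ k⟩) h
    have hterm : ∀ j ∈ Finset.univ.erase i₀, a j * ℓ j = -(a j * (m j : ℤ)) * ℓ i₀ := by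
      intro j hj
      have hji : j ≠ i₀ := (Finset.mem_erase.mp hj).1
      have : ℓ j = -((m j : ℤ) * ℓ i₀) := by rw [hm j hji]; ring
      rw [this]; ring
    have hcL : ∑ i, a i * ℓ i = c * ℓ i₀ := by
      calc ∑ i, a i * ℓ i
          = a i₀ * ℓ i₀ + ∑ j ∈ Finset.univ.erase i₀, a j * ℓ j :=
            (Finset.add_sum_erase _ _ (Finset.mem_univ i₀)).symm
        _ = a i₀ * ℓ i₀ + ∑ j ∈ Finset.univ.erase i₀, -(a j * (m j : ℤ)) * ℓ i₀ := by
            rw [Finset.sum_congr rfl hterm]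
        _ = a i₀ * ℓ i₀ + (-∑ j ∈ Finset.univ.erase i₀, a j * (m j : ℤ)) * ℓ i₀ := by
            rw [neg_mul, Finset.sum_mul, ← Finset.sum_neg_distrib]
            congr 1
            exact Finset.sum_congr rfl fun j _ => neg_mul _ _
        _ = c * ℓ i₀ := by rw [hc]; ring
    have hcnonneg : 0 ≤ c := by
      rw [hcL] at ha
      nlinarith
    rw [key]
    apply AddSubmonoid.add_mem
    · have hz : c • (Pi.single i₀ (1 : ℤ) : Fin r → ℤ)
          = c.toNat • (Pi.single i₀ (1 : ℤ) : Fin r → ℤ) := by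
        rw [← natCast_zsmul, Int.toNat_of_nonneg hcnonneg]
      rw [hz]
      refine AddSubmonoid.nsmul_mem _ (AddSubmonoid.subset_closure ?_) _
      simp only [hG, Set.mem_union, Set.mem_singleton_iff]
      exact Or.inl (Or.inl trivial)
    · apply AddSubmonoid.sum_mem
      intro j hj
      have hji : j ≠ i₀ := (Finset.mem_erase.mp hj).1
      have hcase : ℓ j < 0 ∨ ℓ j = 0 := lt_or_eq_of_le (hneg j hji)
      have hmem : u j ∈ AddSubmonoid.closure G ∧ -u j ∈ AddSubmonoid.closure G := by
        constructor <;>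
        · apply AddSubmonoid.subset_closure
          simp only [hG, Set.mem_union, Set.mem_singleton_iff, Set.mem_setOf_eq]
          rcases hcase with hlt | heq
          · first
            | exact Or.inl (Or.inr ⟨j, hlt, Or.inl (huw j)⟩)
            | exact Or.inl (Or.inr ⟨j, hlt, Or.inr (by rw [huw j])⟩)
          · have hz : (m j : ℤ) * ℓ i₀ = 0 := by rw [hm j hji, heq, neg_zero]
            have hm0 : (m j : ℤ) = 0 :=
              (mul_eq_zero.mp hz).resolve_right hi₀.ne'
            have huj : u j = Pi.single j 1 := by
              rw [hu]; simp only [hm0, Pi.single_zero, zero_add]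
            first
            | exact Or.inr ⟨j, heq, Or.inl huj⟩
            | exact Or.inr ⟨j, heq, Or.inr (by rw [huj])⟩
      exact zsmul_mem_of_pm _ hmem.1 hmem.2 (a j)
  · -- ⊇ : closure ≤ HbarMono
    rw [AddSubmonoid.closure_le]
    intro v hv
    simp only [hG, Set.mem_union, Set.mem_singleton_iff, Set.mem_setOf_eq] at hv
    rw [SetLike.mem_coe, mem_HbarMono]
    obtain (rfl | ⟨j, hj, rfl | rfl⟩) | ⟨j, hj, rfl | rfl⟩ := hv
    · rw [sumL_single, one_mul]; exact hi₀.le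
    · have hji : j ≠ i₀ := fun h => absurd (h ▸ hj) (not_lt.mpr hi₀.le)
      rw [hwsum j hji]
    · have hji : j ≠ i₀ := fun h => absurd (h ▸ hj) (not_lt.mpr hi₀.le)
      rw [sumL_neg, hwsum j hji, neg_zero]
    · rw [sumL_single, hj, mul_zero]
    · rw [sumL_neg, sumL_single, hj, mul_zero, neg_zero]
end

section
/- Assume ℓ_j ∈ {−1, 0, 1} for every index j, that ℓ_j = 1 for some j, and that ℓ_k = −1 for some k (all zeros and poles simple, Artin's conjecture failing at s₀). Then the submonoid H̄(ℓ) of the additive group (Fin r → ℤ) equals the submonoid generated by the elements e_j for indices j with ℓ_j = 1, the elements ±e_j for indices j with ℓ_j = 0, and the elements ±(e_j + e_k) for pairs of indices with ℓ_j = 1 and ℓ_k = −1. -/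
lemma zsmul_mem_closure {M : Type*} [AddCommGroup M] (s : Set M) {g : M}
    (hg : g ∈ s) (hg' : -g ∈ s) (n : ℤ) : n • g ∈ AddSubmonoid.closure s := by
  rcases le_or_gt 0 n with h | h
  · obtain ⟨m, rfl⟩ := Int.eq_ofNat_of_zero_le h
    rw [natCast_zsmul]
    exact (AddSubmonoid.closure s).nsmul_mem (AddSubmonoid.subset_closure hg) _
  · obtain ⟨m, hm⟩ := Int.eq_ofNat_of_zero_le (by omega : (0:ℤ) ≤ -n)
    have key : n • g = m • (-g) := by
      calc n • g = (-n) • (-g) := by rw [neg_smul, smul_neg, neg_neg]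
        _ = (m : ℤ) • (-g) := by rw [hm]
        _ = m • (-g) := natCast_zsmul _ _
    rw [key]
    exact (AddSubmonoid.closure s).nsmul_mem (AddSubmonoid.subset_closure hg') _

/-- If all zeros and poles are simple and Artin's conjecture fails at `s₀` (some `ℓ j = 1`
and some `ℓ k = -1`), then `H̄(ℓ)` is generated by the `e j` with `ℓ j = 1`, the `±e j`
with `ℓ j = 0`, and the `±(e j + e k)` with `ℓ j = 1`, `ℓ k = -1`. -/
theorem stmt18 (r : ℕ) (ℓ : Fin r → ℤ)
    (hs : ∀ j, ℓ j = -1 ∨ ℓ j = 0 ∨ ℓ j = 1)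
    (hz : ∃ j, ℓ j = 1) (hp : ∃ k, ℓ k = -1) :
    HbarMono r ℓ = AddSubmonoid.closure
      ({v | ∃ j, ℓ j = 1 ∧ v = Pi.single j (1 : ℤ)} ∪
       {v | ∃ j, ℓ j = 0 ∧ (v = Pi.single j (1 : ℤ) ∨ v = -Pi.single j (1 : ℤ))} ∪
       {v | ∃ j k, ℓ j = 1 ∧ ℓ k = -1 ∧
          (v = Pi.single j (1 : ℤ) + Pi.single k 1 ∨
           v = -(Pi.single j (1 : ℤ) + Pi.single k 1))}) := by

  obtain ⟨j0, hj0⟩ := hz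
  obtain ⟨k0, hk0⟩ := hp
  set G := ({v | ∃ j, ℓ j = 1 ∧ v = Pi.single j (1 : ℤ)} ∪
       {v | ∃ j, ℓ j = 0 ∧ (v = Pi.single j (1 : ℤ) ∨ v = -Pi.single j (1 : ℤ))} ∪
       {v | ∃ j k, ℓ j = 1 ∧ ℓ k = -1 ∧
          (v = Pi.single j (1 : ℤ) + Pi.single k 1 ∨
           v = -(Pi.single j (1 : ℤ) + Pi.single k 1))} : Set (Fin r → ℤ)) with hG
  have single_sum : ∀ j : Fin r, ∑ i, (Pi.single j (1:ℤ) : Fin r → ℤ) i * ℓ i = ℓ j := by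
    intro j
    rw [Finset.sum_eq_single j]
    · simp
    · intro b _ hb; simp [Pi.single_apply, Ne.symm hb]
    · simp
  apply le_antisymm
  · -- hard direction
    intro a ha
    have ha' : (0:ℤ) ≤ ∑ i, a i * ℓ i := ha
    -- definitions
    set e : Fin r → (Fin r → ℤ) := fun j => Pi.single j (1:ℤ) with he
    have hpair : ∀ j k : Fin r, ℓ j = 1 → ℓ k = -1 →
        ∀ n : ℤ, n • (e j + e k) ∈ AddSubmonoid.closure G := by
      intro j k hj hk n
      apply zsmul_mem_closure
      · exact Or.inr ⟨j, k, hj, hk, Or.inl rfl⟩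
      · exact Or.inr ⟨j, k, hj, hk, Or.inr rfl⟩
    have hzero : ∀ j : Fin r, ℓ j = 0 → ∀ n : ℤ, n • e j ∈ AddSubmonoid.closure G := by
      intro j hj n
      apply zsmul_mem_closure
      · exact Or.inl (Or.inr ⟨j, hj, Or.inl rfl⟩)
      · exact Or.inl (Or.inr ⟨j, hj, Or.inr rfl⟩)
    set S := ∑ i, a i * ℓ i with hSdef
    set T := ∑ i, (if ℓ i = 1 then a i else 0) with hTdef
    set U := ∑ i, (if ℓ i = -1 then a i else 0) with hUdef
    set t : Fin r → (Fin r → ℤ) := fun i =>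
      if ℓ i = 0 then a i • e i
      else if ℓ i = 1 then a i • (e i + e k0)
      else a i • (e j0 + e i) with ht
    have hSTU : S = T - U := by
      rw [hSdef, hTdef, hUdef, ← Finset.sum_sub_distrib]
      apply Finset.sum_congr rfl
      intro i _
      rcases hs i with h | h | h <;> simp [h]
    have hsumt : ∑ i, t i = a + T • e k0 + U • e j0 := by
      have : ∀ i, t i = a i • e i +
          ((if ℓ i = 1 then a i else 0) • e k0 + (if ℓ i = -1 then a i else 0) • e j0) := by
        intro i
        rcases hs i with h | h | h <;>
          simp [ht, h, smul_add] <;> abel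
      rw [Finset.sum_congr rfl (fun i _ => this i), Finset.sum_add_distrib,
        Finset.sum_add_distrib, ← Finset.sum_smul, ← Finset.sum_smul, ← hTdef, ← hUdef]
      have : ∑ i, a i • e i = a := by
        funext m
        simp [he, Finset.sum_apply, Pi.single_apply, Finset.sum_ite_eq']
      rw [this]
      abel
    have key : a = S • e j0 + ((-T) • (e j0 + e k0) + ∑ i, t i) := by
      rw [hsumt, hSTU]
      module
    rw [key]
    refine AddSubmonoid.add_mem _ ?_ (AddSubmonoid.add_mem _ (hpair j0 k0 hj0 hk0 (-T)) ?_)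
    · obtain ⟨m, hm⟩ := Int.eq_ofNat_of_zero_le ha'
      have hS' : S • e j0 = m • e j0 := by rw [hm, natCast_zsmul]
      rw [hS']
      refine (AddSubmonoid.closure G).nsmul_mem (AddSubmonoid.subset_closure ?_) _
      exact Or.inl (Or.inl ⟨j0, hj0, rfl⟩)
    · apply AddSubmonoid.sum_mem
      intro i _
      rcases hs i with h | h | h
      · have hti : t i = a i • (e j0 + e i) := by simp [ht, h]
        rw [hti]; exact hpair j0 i hj0 h (a i)
      · have hti : t i = a i • e i := by simp [ht, h]
        rw [hti]; exact hzero i h (a i)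
      · have hti : t i = a i • (e i + e k0) := by simp [ht, h]
        rw [hti]; exact hpair i k0 h hk0 (a i)
  · rw [AddSubmonoid.closure_le]
    rintro v ((⟨j, hj, rfl⟩ | ⟨j, hj, (rfl | rfl)⟩) | ⟨j, k, hj, hk, (rfl | rfl)⟩) <;>
      show (0:ℤ) ≤ ∑ i, _ * ℓ i
    · rw [single_sum j, hj]; norm_num
    · rw [single_sum j, hj]
    · simp only [Pi.neg_apply, neg_mul]
      rw [Finset.sum_neg_distrib, single_sum j, hj]
      simp
    · simp only [Pi.add_apply, add_mul]
      rw [Finset.sum_add_distrib, single_sum j, single_sum k, hj, hk]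
      norm_num
    · simp only [Pi.neg_apply, Pi.add_apply, neg_mul]
      rw [Finset.sum_neg_distrib]
      simp only [add_mul]
      rw [Finset.sum_add_distrib, single_sum j, single_sum k, hj, hk]
      norm_num
end
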